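/- Let K be a field, N ≥ 2 an integer, E and E' finite-dimensional K-vector spaces, R a subspace of E^⊗N and R' a subspace of E'^⊗N, and f : E → E' a K-linear map such that f^⊗N(R) ⊆ R'. Let R^⊥ ⊆ (E^*)^⊗N be the annihilator of R under the canonical pairing of (E^*)^⊗N with E^⊗N. Set ℬ^! = T(E^*)/(R^⊥) and 𝒞 = T(E')/(R'), the quotients of the tensor algebras by the two-sided ideals generated by the images of R^⊥ and R' under the canonical inclusions (E^*)^⊗N → T(E^*), E'^⊗N → T(E'). Let (e_1, …, e_n) be a basis of E with dual basis (e^1, …, e^n). Then the element ξ = Σ_{i=1}^n q(e^i) ⊗ q'(f(e_i)) of the algebra ℬ^! ⊗ 𝒞 satisfies ξ^N = 0, where q : T(E^*) → ℬ^! and q' : T(E') → 𝒞 are the quotient maps and elements of E^* and E' are viewed in the tensor algebras via the canonical inclusions. -/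

import Mathlib

open TensorProduct

section Pairing

variable (K : Type*) [CommSemiring K] (ι : Type*) [Fintype ι]
variable (M : ι → Type*) [∀ i, AddCommMonoid (M i)] [∀ i, Module K (M i)]

/-- The canonical pairing map `⨂ᵢ (Mᵢ)^* →ₗ (⨂ᵢ Mᵢ)^*` sending `⊗ᵢ φᵢ` to the functional
`⊗ᵢ xᵢ ↦ ∏ᵢ φᵢ(xᵢ)`. -/
noncomputable def piTensorDualPairing :
    (⨂[K] i, Module.Dual K (M i)) →ₗ[K] Module.Dual K (⨂[K] i, M i) :=
  (LinearMap.llcomp K (⨂[K] i, M i) (⨂[K] _ : ι, K) K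
      (PiTensorProduct.constantBaseRingEquiv ι K).toLinearMap).comp
    PiTensorProduct.piTensorHomMap

end Pairing

section HomogeneousAlgebra

variable (K : Type*) [Field K] (V : Type*) [AddCommGroup V] [Module K V]

/-- The relation on `T(V)` whose induced ring congruence identifies `x ~ y` iff
`x - y` lies in the two-sided ideal generated by (the canonical image of) `R ⊆ V^⊗N`. -/
def homRel {N : ℕ} (R : Submodule K (⨂[K]^N V)) :
    TensorAlgebra K V → TensorAlgebra K V → Prop :=
  fun x y => x ∈ Submodule.map (TensorPower.toTensorAlgebra (R := K) (M := V) (n := N)) R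
    ∧ y = 0

/-- The `N`-homogeneous algebra `A(V, R) = T(V)/(R)`. -/
noncomputable abbrev HomAlg {N : ℕ} (R : Submodule K (⨂[K]^N V)) : Type _ :=
  RingQuot (homRel K V R)

/-- The quotient map `T(V) → A(V, R)`. -/
noncomputable def homQuot {N : ℕ} (R : Submodule K (⨂[K]^N V)) :
    TensorAlgebra K V →ₐ[K] HomAlg K V R :=
  RingQuot.mkAlgHom K (homRel K V R)

end HomogeneousAlgebra

lemma aux_sum_pow {A : Type*} [Semiring A] {ι : Type*} [Fintype ι] (x : ι → A) :
    ∀ m : ℕ, (∑ i, x i) ^ m = ∑ g : Fin m → ι, (List.ofFn fun k => x (g k)).prod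
  | 0 => by simp
  | (m + 1) => by
    rw [pow_succ', aux_sum_pow x m, Fintype.sum_mul_sum,
      ← Fintype.sum_prod_type (f := fun p : ι × (Fin m → ι) =>
          x p.1 * (List.ofFn fun k => x (p.2 k)).prod)]
    exact Fintype.sum_equiv (Fin.consEquiv fun _ => ι) _ _
      (fun p => by simp [Fin.consEquiv, List.ofFn_succ])

lemma aux_tmul_listprod {K A C : Type*} [CommSemiring K] [Semiring A] [Semiring C]
    [Algebra K A] [Algebra K C] :
    ∀ (m : ℕ) (a : Fin m → A) (c : Fin m → C),
      (List.ofFn fun k => a k ⊗ₜ[K] c k).prod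
        = (List.ofFn a).prod ⊗ₜ[K] (List.ofFn c).prod
  | 0, a, c => by simp [Algebra.TensorProduct.one_def]
  | (m + 1), a, c => by
    simp [List.ofFn_succ, aux_tmul_listprod m (fun k => a k.succ) (fun k => c k.succ),
      Algebra.TensorProduct.tmul_mul_tmul]

lemma aux_pairing_tprod {K : Type*} [CommSemiring K] {ι : Type*} [Fintype ι]
    {M : ι → Type*} [∀ i, AddCommMonoid (M i)] [∀ i, Module K (M i)]
    (φ : Π i, Module.Dual K (M i)) (x : Π i, M i) :
    piTensorDualPairing K ι M (PiTensorProduct.tprod K φ) (PiTensorProduct.tprod K x)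
      = ∏ i, φ i (x i) := by
  simp [piTensorDualPairing]


set_option maxHeartbeats 2000000 in
/-- Let `f : E → E'` be linear with `f^⊗N(R) ⊆ R'`, let
`ℬ^! = T(E^*)/(R^⊥)` and `𝒞 = T(E')/(R')`, and let `(e_i)` be a basis of `E` with dual
basis `(e^i)`.  Then the element `ξ = Σᵢ q(e^i) ⊗ q'(f(e_i))` of the algebra `ℬ^! ⊗ 𝒞`
satisfies `ξ^N = 0`. -/
theorem statement5 (K : Type*) [Field K] (N : ℕ) (hN : 2 ≤ N)
    (E E' : Type*) [AddCommGroup E] [Module K E] [AddCommGroup E'] [Module K E']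
    [FiniteDimensional K E] [FiniteDimensional K E']
    (R : Submodule K (⨂[K]^N E)) (R' : Submodule K (⨂[K]^N E'))
    (f : E →ₗ[K] E')
    (hf : Submodule.map (PiTensorProduct.map (fun _ : Fin N => f)) R ≤ R')
    (n : ℕ) (b : Module.Basis (Fin n) K E) :
    (∑ i : Fin n,
        (homQuot K (Module.Dual K E)
            (Submodule.comap (piTensorDualPairing K (Fin N) (fun _ => E))
              R.dualAnnihilator) (TensorAlgebra.ι K (b.dualBasis i)))
          ⊗ₜ[K] (homQuot K E' R' (TensorAlgebra.ι K (f (b i))))) ^ N = 0 := by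

  classical
  set Rperp : Submodule K (⨂[K]^N (Module.Dual K E)) :=
    Submodule.comap (piTensorDualPairing K (Fin N) (fun _ => E)) R.dualAnnihilator with hRperp
  set qA := homQuot K (Module.Dual K E) Rperp with hqA
  set qC := homQuot K E' R' with hqC
  set MA : (⨂[K]^N (Module.Dual K E)) →ₗ[K] HomAlg K (Module.Dual K E) Rperp :=
    qA.toLinearMap ∘ₗ TensorPower.toTensorAlgebra with hMA
  set MC : (⨂[K]^N E') →ₗ[K] HomAlg K E' R' :=
    qC.toLinearMap ∘ₗ TensorPower.toTensorAlgebra with hMC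
  set F : (⨂[K]^N E) →ₗ[K] (⨂[K]^N E') := PiTensorProduct.map (fun _ => f) with hF
  set t : (Fin N → Fin n) → ⨂[K]^N (Module.Dual K E) :=
    (fun g => PiTensorProduct.tprod K fun k => b.dualBasis (g k)) with ht
  set s : (Fin N → Fin n) → ⨂[K]^N E :=
    (fun g => PiTensorProduct.tprod K fun k => b (g k)) with hs
  set lam : (Fin N → Fin n) → Module.Dual K (⨂[K]^N E) :=
    (fun g => piTensorDualPairing K (Fin N) (fun _ => E) (t g)) with hlam
  -- MA vanishes on Rperp
  have hMA0 : ∀ u ∈ Rperp, MA u = 0 := by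
    intro u hu
    have hrel : homRel K (Module.Dual K E) Rperp (TensorPower.toTensorAlgebra u) 0 :=
      ⟨⟨u, hu, rfl⟩, rfl⟩
    have h2 : qA (TensorPower.toTensorAlgebra u) = qA 0 := RingQuot.mkAlgHom_rel K hrel
    simpa [hMA] using h2.trans (map_zero _)
  -- MC vanishes on R'
  have hMC0 : ∀ u ∈ R', MC u = 0 := by
    intro u hu
    have hrel : homRel K E' R' (TensorPower.toTensorAlgebra u) 0 := ⟨⟨u, hu, rfl⟩, rfl⟩
    have h2 : qC (TensorPower.toTensorAlgebra u) = qC 0 := RingQuot.mkAlgHom_rel K hrel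
    simpa [hMC] using h2.trans (map_zero _)
  -- the reproducing property
  have repro : ∀ w : ⨂[K]^N E, ∑ h : Fin N → Fin n, lam h w • s h = w := by
    have hL : (∑ h : Fin N → Fin n, (lam h).smulRight (s h)) = LinearMap.id := by
      apply PiTensorProduct.ext
      apply MultilinearMap.ext
      intro x
      simp only [LinearMap.compMultilinearMap_apply, LinearMap.sum_apply,
        LinearMap.smulRight_apply, LinearMap.id_apply]
      have hx : PiTensorProduct.tprod K x
          = PiTensorProduct.tprod K (fun k => ∑ i : Fin n, b.repr (x k) i • b i) := by
        congr 1; exact funext fun k => (b.sum_repr (x k)).symm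
      conv_rhs => rw [hx]
      rw [MultilinearMap.map_sum]
      refine Finset.sum_congr rfl fun h _ => ?_
      rw [MultilinearMap.map_smul_univ]
      congr 1
      rw [hlam, ht]
      simp only [aux_pairing_tprod]
      exact Finset.prod_congr rfl fun k _ => b.dualBasis_apply (h k) (x k)
    intro w
    have := DFunLike.congr_fun hL w
    simpa only [LinearMap.sum_apply, LinearMap.smulRight_apply, LinearMap.id_apply] using this
  -- projection onto R
  obtain ⟨S, hS⟩ := Submodule.exists_isCompl R
  set P : (⨂[K]^N E) →ₗ[K] (⨂[K]^N E) :=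
    R.subtype ∘ₗ R.projectionOnto S hS with hP
  have hPmem : ∀ w, P w ∈ R := fun w => (R.projectionOnto S hS w).2
  have hPid : ∀ r ∈ R, P r = r := by
    intro r hr
    have := Submodule.linearProjOfIsCompl_apply_left hS ⟨r, hr⟩
    simp only [hP, LinearMap.coe_comp, Function.comp_apply, Submodule.coe_subtype]
    rw [show (⟨r, hr⟩ : R).1 = r from rfl] at this
    rw [this]
  set w : (Fin N → Fin n) → ⨂[K]^N E := (fun g => s g - P (s g)) with hw
  set u : (Fin N → Fin n) → ⨂[K]^N (Module.Dual K E) :=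
    (fun h => ∑ g, lam h (w g) • t g) with hu_def
  have hu : ∀ h, u h ∈ Rperp := by
    intro h
    rw [hRperp, Submodule.mem_comap, Submodule.mem_dualAnnihilator]
    intro r hr
    have expand : piTensorDualPairing K (Fin N) (fun _ => E) (u h) r
        = ∑ g, lam h (w g) * lam g r := by
      rw [hu_def]
      simp only [map_sum, map_smul, LinearMap.sum_apply, LinearMap.smul_apply, hlam,
        smul_eq_mul]
    rw [expand]
    have h1 : ∑ g, lam g r • w g = 0 := by
      simp only [hw, smul_sub]
      rw [Finset.sum_sub_distrib]
      have h3 : ∑ g : Fin N → Fin n, lam g r • P (s g) = P (∑ g, lam g r • s g) := by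
        rw [map_sum]
        exact Finset.sum_congr rfl fun g _ => (map_smul P _ _).symm
      rw [h3, repro r, hPid r hr, sub_self]
    calc ∑ g, lam h (w g) * lam g r = ∑ g, lam g r * lam h (w g) := by
          exact Finset.sum_congr rfl fun g _ => mul_comm _ _
      _ = lam h (∑ g, lam g r • w g) := by
          rw [map_sum]
          exact Finset.sum_congr rfl fun g _ => by rw [map_smul, smul_eq_mul]
      _ = 0 := by rw [h1, map_zero]
  -- identify the terms of ξ^N
  have hA : ∀ g : Fin N → Fin n,
      MA (t g) = (List.ofFn fun k => qA (TensorAlgebra.ι K (b.dualBasis (g k)))).prod := by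
    intro g
    simp only [hMA, ht, LinearMap.coe_comp, Function.comp_apply, AlgHom.toLinearMap_apply,
      TensorPower.toTensorAlgebra_tprod, TensorAlgebra.tprod_apply]
    rw [map_list_prod, List.map_ofFn]
    rfl
  have hC : ∀ g : Fin N → Fin n,
      MC (F (s g)) = (List.ofFn fun k => qC (TensorAlgebra.ι K (f (b (g k))))).prod := by
    intro g
    simp only [hF, hs, PiTensorProduct.map_tprod, hMC, LinearMap.coe_comp, Function.comp_apply,
      AlgHom.toLinearMap_apply, TensorPower.toTensorAlgebra_tprod, TensorAlgebra.tprod_apply]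
    rw [map_list_prod, List.map_ofFn]
    rfl
  rw [aux_sum_pow]
  have step1 : ∑ g : Fin N → Fin n,
      (List.ofFn fun k => qA (TensorAlgebra.ι K (b.dualBasis (g k)))
        ⊗ₜ[K] qC (TensorAlgebra.ι K (f (b (g k))))).prod
      = ∑ g : Fin N → Fin n, MA (t g) ⊗ₜ[K] MC (F (s g)) := by
    refine Finset.sum_congr rfl fun g _ => ?_
    rw [aux_tmul_listprod, hA, hC]
  rw [step1]
  -- decompose s g = w g + P (s g)
  have step2 : ∑ g : Fin N → Fin n, MA (t g) ⊗ₜ[K] MC (F (s g))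
      = ∑ g : Fin N → Fin n, MA (t g) ⊗ₜ[K] MC (F (w g))
        + ∑ g : Fin N → Fin n, MA (t g) ⊗ₜ[K] MC (F (P (s g))) := by
    rw [← Finset.sum_add_distrib]
    refine Finset.sum_congr rfl fun g _ => ?_
    rw [← TensorProduct.tmul_add, ← map_add, ← map_add]
    congr 2
    simp [hw]
  rw [step2]
  have hzero2 : ∑ g : Fin N → Fin n, MA (t g) ⊗ₜ[K] MC (F (P (s g))) = 0 := by
    refine Finset.sum_eq_zero fun g _ => ?_
    rw [hMC0 (F (P (s g))) (hf ⟨P (s g), hPmem (s g), rfl⟩), TensorProduct.tmul_zero]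
  have hzero1 : ∑ g : Fin N → Fin n, MA (t g) ⊗ₜ[K] MC (F (w g)) = 0 := by
    have hrw : ∀ g : Fin N → Fin n, MA (t g) ⊗ₜ[K] MC (F (w g))
        = ∑ h : Fin N → Fin n, lam h (w g) • (MA (t g) ⊗ₜ[K] MC (F (s h))) := by
      intro g
      conv_lhs => rw [← repro (w g)]
      rw [map_sum, map_sum, TensorProduct.tmul_sum]
      refine Finset.sum_congr rfl fun h _ => ?_
      rw [map_smul, map_smul, TensorProduct.tmul_smul]
    calc ∑ g : Fin N → Fin n, MA (t g) ⊗ₜ[K] MC (F (w g))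
        = ∑ g : Fin N → Fin n, ∑ h : Fin N → Fin n,
            lam h (w g) • (MA (t g) ⊗ₜ[K] MC (F (s h))) := by
          exact Finset.sum_congr rfl fun g _ => hrw g
      _ = ∑ h : Fin N → Fin n, ∑ g : Fin N → Fin n,
            lam h (w g) • (MA (t g) ⊗ₜ[K] MC (F (s h))) := Finset.sum_comm
      _ = ∑ h : Fin N → Fin n, MA (u h) ⊗ₜ[K] MC (F (s h)) := by
          refine Finset.sum_congr rfl fun h _ => ?_
          rw [hu_def]
          simp only [map_sum, map_smul]
          rw [TensorProduct.sum_tmul]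
          exact Finset.sum_congr rfl fun g _ => by rw [TensorProduct.smul_tmul']
      _ = 0 := by
          refine Finset.sum_eq_zero fun h _ => ?_
          rw [hMA0 (u h) (hu h), TensorProduct.zero_tmul]
  rw [hzero1, hzero2, add_zero]
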